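/- Let p, q ∈ ℂ[t] be polynomials in one variable. Then the image {(p(t), q(t)) : t ∈ ℂ} of the polynomial map t ↦ (p(t), q(t)) is Zariski closed in ℂ²; that is, it equals the common zero locus in ℂ² of a family of polynomials in two variables, so the polynomial parametric representation covers all points of the smallest affine algebraic set containing it. -/
import Mathlib
open Polynomial

lemma isIntegral_X_of_mem (R : Subalgebra ℂ ℂ[X]) (r : ℂ[X]) (hrR : r ∈ R)
    (hr : 0 < r.natDegree) : IsIntegral R (Polynomial.X : ℂ[X]) := by
  set n := r.natDegree with hn
  set c := r.leadingCoeff with hc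
  have hr0 : r ≠ 0 := fun h => by rw [h] at hn; simp [hn] at hr
  have hc0 : c ≠ 0 := leadingCoeff_ne_zero.mpr hr0
  have hmem : c⁻¹ • r ∈ R := R.smul_mem hrR _
  have hr' : r = ∑ i ∈ Finset.range (n + 1), Polynomial.C (r.coeff i) * Polynomial.X ^ i := by
    conv_lhs => rw [Polynomial.as_sum_range' r (n+1) (Nat.lt_succ_self n)]
    simp [Polynomial.C_mul_X_pow_eq_monomial]
  have key : c⁻¹ • r = Polynomial.X ^ n +
      ∑ i ∈ Finset.range n, Polynomial.C (c⁻¹ * r.coeff i) * Polynomial.X ^ i := by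
    conv_lhs => rw [hr']
    rw [Finset.smul_sum, Finset.sum_range_succ]
    have hterm : ∀ i, c⁻¹ • (Polynomial.C (r.coeff i) * Polynomial.X ^ i)
        = Polynomial.C (c⁻¹ * r.coeff i) * Polynomial.X ^ i := fun i => by
      rw [← smul_mul_assoc, Polynomial.smul_C, smul_eq_mul]
    simp only [hterm]
    have hcn : c⁻¹ * r.coeff n = 1 := by
      rw [hn, r.coeff_natDegree, ← hc]; exact inv_mul_cancel₀ hc0
    rw [hcn, map_one, one_mul, add_comm]
  refine ⟨Polynomial.X ^ n +
    ((∑ i ∈ Finset.range n, Polynomial.C (algebraMap ℂ R (c⁻¹ * r.coeff i)) * Polynomial.X ^ i)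
      - Polynomial.C (⟨c⁻¹ • r, hmem⟩ : R)), ?_, ?_⟩
  · apply Polynomial.monic_X_pow_add
    apply lt_of_le_of_lt (Polynomial.degree_sub_le _ _)
    apply max_lt
    · apply lt_of_le_of_lt (Polynomial.degree_sum_le _ _)
      apply Finset.sup_lt_iff (show (⊥ : WithBot ℕ) < n by exact_mod_cast WithBot.bot_lt_coe n) |>.mpr
      intro i hi
      apply lt_of_le_of_lt (Polynomial.degree_C_mul_X_pow_le _ _)
      exact_mod_cast WithBot.coe_lt_coe.mpr (Finset.mem_range.mp hi)
    · exact lt_of_le_of_lt Polynomial.degree_C_le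
        (by exact_mod_cast WithBot.coe_lt_coe.mpr hr)
  · show Polynomial.eval₂ (algebraMap R ℂ[X]) Polynomial.X _ = 0
    simp only [eval₂_add, eval₂_sub, eval₂_X_pow, eval₂_finset_sum, eval₂_mul, eval₂_C, eval₂_X,
      eval₂_pow]
    show (Polynomial.X : ℂ[X]) ^ n +
      ((∑ i ∈ Finset.range n, Polynomial.C (c⁻¹ * r.coeff i) * Polynomial.X ^ i)
        - c⁻¹ • r) = 0
    rw [key]
    ring


lemma adjoin_X_eq_top (R : Subalgebra ℂ ℂ[X]) :
    Algebra.adjoin R {(Polynomial.X : ℂ[X])} = ⊤ := by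
  rw [eq_top_iff]
  intro f _
  induction f using Polynomial.induction_on with
  | C a =>
    have : algebraMap R ℂ[X] (⟨Polynomial.C a, R.algebraMap_mem a⟩ : R) = Polynomial.C a := rfl
    rw [← this]
    exact Subalgebra.algebraMap_mem _ _
  | add f g hf hg => exact add_mem (hf trivial) (hg trivial)
  | monomial n a ih =>
    rw [pow_succ, ← mul_assoc]
    exact mul_mem (ih trivial) (Algebra.subset_adjoin rfl)

lemma isIntegral_of_mem (R : Subalgebra ℂ ℂ[X]) (hX : IsIntegral R (Polynomial.X : ℂ[X])) :
    Algebra.IsIntegral R ℂ[X] := by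
  rw [← integralClosure_eq_top_iff, eq_top_iff, ← adjoin_X_eq_top R]
  rw [Algebra.adjoin_le_iff]
  intro x hx
  rw [Set.mem_singleton_iff.mp hx]
  exact hX


/-- The image of a polynomial map `t ↦ (p(t), q(t))` from ℂ to ℂ² is Zariski closed:
it is the common zero locus of a family of two-variable polynomials. -/
theorem image_of_polynomial_parametrization_is_zariski_closed (p q : Polynomial ℂ) :
    ∃ S : Set (MvPolynomial (Fin 2) ℂ),
      {w : ℂ × ℂ | ∃ t : ℂ, (p.eval t, q.eval t) = w}
        = {w : ℂ × ℂ | ∀ f ∈ S, MvPolynomial.eval ![w.1, w.2] f = 0} := by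
  set φ : MvPolynomial (Fin 2) ℂ →ₐ[ℂ] ℂ[X] := MvPolynomial.aeval ![p, q] with hφ
  refine ⟨{f | φ f = 0}, ?_⟩
  ext w
  simp only [Set.mem_setOf_eq]
  constructor
  · rintro ⟨t, rfl⟩ f hf
    have hcomp : (Polynomial.aeval t).comp φ
        = MvPolynomial.aeval ![p.eval t, q.eval t] := by
      apply MvPolynomial.algHom_ext
      intro i
      fin_cases i <;> simp [hφ]
    have : MvPolynomial.eval ![p.eval t, q.eval t] f
        = Polynomial.aeval t (φ f) := by
      rw [← MvPolynomial.coe_aeval_eq_eval, ← hcomp]; rfl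
    simp only [this, hf, map_zero]
  · intro h
    set ev : MvPolynomial (Fin 2) ℂ →ₐ[ℂ] ℂ := MvPolynomial.aeval ![w.1, w.2] with hev
    have hker : ∀ f ∈ RingHom.ker φ.toRingHom, ev f = 0 := by
      intro f hf
      have := h f (RingHom.mem_ker.mp hf)
      rwa [← MvPolynomial.coe_aeval_eq_eval] at this
    by_cases hdeg : 0 < p.natDegree ∨ 0 < q.natDegree
    · -- get a nonconstant element of the range
      obtain ⟨r, hrR, hr⟩ : ∃ r, r ∈ φ.range ∧ 0 < r.natDegree := by
        rcases hdeg with h1 | h1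
        · exact ⟨p, ⟨MvPolynomial.X 0, by simp [hφ]⟩, h1⟩
        · exact ⟨q, ⟨MvPolynomial.X 1, by simp [hφ]⟩, h1⟩
      set R := φ.range with hR
      haveI : Algebra.IsIntegral R ℂ[X] :=
        isIntegral_of_mem R (isIntegral_X_of_mem R r hrR hr)
      set e := Ideal.quotientKerEquivRange φ with he
      set ev' := Ideal.Quotient.liftₐ (RingHom.ker φ.toRingHom) ev hker with hev'
      set ψ : R →ₐ[ℂ] ℂ := ev'.comp e.symm.toAlgHom with hψdef
      have hψ : ∀ f : MvPolynomial (Fin 2) ℂ,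
          ψ (⟨φ f, ⟨f, rfl⟩⟩ : R) = ev f := by
        intro f
        have h1 : e (Ideal.Quotient.mk _ f) = (⟨φ f, ⟨f, rfl⟩⟩ : R) := rfl
        rw [hψdef]
        simp only [AlgHom.coe_comp, AlgEquiv.toAlgHom_eq_coe, AlgHom.coe_coe,
          Function.comp_apply, ← h1, AlgEquiv.symm_apply_apply]
        show ev' (e.symm (e (Ideal.Quotient.mk _ f))) = ev f
        rw [e.symm_apply_apply]
        rfl
      set P := RingHom.ker ψ.toRingHom with hP
      haveI hPmax : P.IsMaximal := by
        apply RingHom.ker_isMaximal_of_surjective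
        intro z
        exact ⟨algebraMap ℂ R z, ψ.commutes z⟩
      have hbot : RingHom.ker (algebraMap R ℂ[X]) ≤ P := by
        intro x hx
        rw [RingHom.mem_ker] at hx
        have : x = 0 := Subtype.ext hx
        simp [this]
      obtain ⟨Q, hQmax, hQP⟩ := Ideal.exists_ideal_over_maximal_of_isIntegral P hbot
      -- Q is generated by a degree-one polynomial
      set g := Submodule.IsPrincipal.generator Q with hg
      have hgQ : Ideal.span {g} = Q := Ideal.span_singleton_generator Q
      have hg0 : g ≠ 0 := by
        intro hg0
        rw [hg0] at hgQ
        rw [Ideal.span_singleton_eq_bot.mpr rfl] at hgQ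
        have hXQ : (⊥ : Ideal ℂ[X]) = Ideal.span {Polynomial.X} := by
          apply (hgQ ▸ hQmax).eq_of_le
          · rw [Ne, Ideal.span_singleton_eq_top]
            exact Polynomial.not_isUnit_X
          · exact bot_le
        rw [eq_comm, Ideal.span_singleton_eq_bot] at hXQ
        exact Polynomial.X_ne_zero hXQ
      have hgprime : Prime g := by
        rw [← Ideal.span_singleton_prime hg0]
        exact hgQ ▸ hQmax.isPrime
      have hgdeg : g.degree = 1 := IsAlgClosed.degree_eq_one_of_irreducible _ hgprime.irreducible
      obtain ⟨t₀, ht₀⟩ := IsAlgClosed.exists_root g (by rw [hgdeg]; exact one_ne_zero)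
      have heval : ∀ f ∈ Q, Polynomial.eval t₀ f = 0 := by
        intro f hf
        rw [← hgQ, Ideal.mem_span_singleton] at hf
        obtain ⟨s, rfl⟩ := hf
        simp [Polynomial.IsRoot.def.mp ht₀]
      -- p - C w.1 ∈ Q
      have hp1 : Polynomial.eval t₀ p = w.1 := by
        have hmem : (p - Polynomial.C w.1) ∈ R :=
          ⟨MvPolynomial.X 0 - MvPolynomial.C w.1, by simp [hφ]⟩
        have hx : (⟨p - Polynomial.C w.1, hmem⟩ : R) ∈ P := by
          rw [hP, RingHom.mem_ker]
          have : (⟨p - Polynomial.C w.1, hmem⟩ : R)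
              = (⟨φ (MvPolynomial.X 0 - MvPolynomial.C w.1),
                  ⟨MvPolynomial.X 0 - MvPolynomial.C w.1, rfl⟩⟩ : R) := by
            apply Subtype.ext; simp [hφ]
          rw [this]
          show ψ _ = 0
          rw [hψ]
          simp [hev]
        have : (p - Polynomial.C w.1 : ℂ[X]) ∈ Q := by
          rw [← hQP] at hx
          exact hx
        have := heval _ this
        simpa [sub_eq_zero] using this
      have hq1 : Polynomial.eval t₀ q = w.2 := by
        have hmem : (q - Polynomial.C w.2) ∈ R :=
          ⟨MvPolynomial.X 1 - MvPolynomial.C w.2, by simp [hφ]⟩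
        have hx : (⟨q - Polynomial.C w.2, hmem⟩ : R) ∈ P := by
          rw [hP, RingHom.mem_ker]
          have : (⟨q - Polynomial.C w.2, hmem⟩ : R)
              = (⟨φ (MvPolynomial.X 1 - MvPolynomial.C w.2),
                  ⟨MvPolynomial.X 1 - MvPolynomial.C w.2, rfl⟩⟩ : R) := by
            apply Subtype.ext; simp [hφ]
          rw [this]
          show ψ _ = 0
          rw [hψ]
          simp [hev]
        have : (q - Polynomial.C w.2 : ℂ[X]) ∈ Q := by
          rw [← hQP] at hx
          exact hx
        have := heval _ this
        simpa [sub_eq_zero] using this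
      exact ⟨t₀, Prod.ext hp1 hq1⟩
    · push_neg at hdeg
      obtain ⟨h1, h2⟩ := hdeg
      have hp : p = Polynomial.C (p.coeff 0) :=
        Polynomial.eq_C_of_natDegree_eq_zero (Nat.le_zero.mp (Nat.not_lt.mp (by simpa using h1)))
      have hq : q = Polynomial.C (q.coeff 0) :=
        Polynomial.eq_C_of_natDegree_eq_zero (Nat.le_zero.mp (Nat.not_lt.mp (by simpa using h2)))
      have e1 := h (MvPolynomial.X 0 - MvPolynomial.C (p.coeff 0)) (by simp [hφ, ← hp])
      have e2 := h (MvPolynomial.X 1 - MvPolynomial.C (q.coeff 0)) (by simp [hφ, ← hq])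
      simp at e1 e2
      refine ⟨0, ?_⟩
      rw [hp, hq]
      simp only [Polynomial.eval_C]
      exact Prod.ext (sub_eq_zero.mp e1).symm (sub_eq_zero.mp e2).symm
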